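/- For k ≥ 2 and s ∈ (0,1], the difference P(|min(X₁,…,X_{k-1},s)| < |Z|) − P(|max(X₁,…,X_{k-1},s)| < |Z|) equals ((1+s)^k + (1−s)^k − 2)/(k·2^{k-1}), where all variables are i.i.d. uniform on [-1,1]. -/

import Mathlib

open MeasureTheory

noncomputable def unif : Measure ℝ :=
  (2 : ENNReal)⁻¹ • (volume.restrict (Set.Icc (-1 : ℝ) 1))

/-! Integrate over the `X`'s first, with `c = |Z|` fixed. For `c ≤ s` the event
`|min (X, s)| < c` is the box `{X_i > -c}` minus the box `{X_i ≥ c}`, while `|max (X, s)| < c`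
is impossible; for `c > s` they are the boxes `{X_i > -c}` and `{X_i < c}`, of equal probability.
So the two conditional probabilities differ only when `|Z| ≤ s`, by
`((1 + c) / 2) ^ (k - 1) - ((1 - c) / 2) ^ (k - 1)`, and integrating this over `c ∈ [0, s]`
gives the formula. -/

open Set

instance : NullSingletonClass unif := ⟨fun x => by simp [unif]⟩

lemma unif_real_apply (S : Set ℝ) : unif.real S = 2⁻¹ * volume.real (S ∩ Icc (-1) 1) := by
  simp [unif, measureReal_def, Measure.restrict_apply' measurableSet_Icc]

instance : IsProbabilityMeasure unif := by
  refine ⟨?_⟩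
  simp [unif, Real.volume_Icc]
  norm_num [ENNReal.inv_mul_cancel]

lemma unif_real_Iic {b : ℝ} (hb₀ : -1 ≤ b) (hb₁ : b ≤ 1) : unif.real (Iic b) = (1 + b) / 2 := by
  rw [unif_real_apply, ← Ici_inter_Iic, inter_left_comm, Iic_inter_Iic, inf_of_le_left hb₁,
    Ici_inter_Iic, Real.volume_real_Icc_of_le hb₀]
  ring

lemma unif_real_Iio {b : ℝ} (hb₀ : -1 ≤ b) (hb₁ : b ≤ 1) : unif.real (Iio b) = (1 + b) / 2 := by
  rw [measureReal_congr Iio_ae_eq_Iic, unif_real_Iic hb₀ hb₁]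

lemma unif_real_Ioi {a : ℝ} (ha₀ : -1 ≤ a) (ha₁ : a ≤ 1) : unif.real (Ioi a) = (1 - a) / 2 := by
  rw [← compl_Iic, probReal_compl_eq_one_sub measurableSet_Iic, unif_real_Iic ha₀ ha₁]
  ring

lemma unif_real_Ici {a : ℝ} (ha₀ : -1 ≤ a) (ha₁ : a ≤ 1) : unif.real (Ici a) = (1 - a) / 2 := by
  rw [← compl_Iio, probReal_compl_eq_one_sub measurableSet_Iio, unif_real_Iio ha₀ ha₁]
  ring

lemma ae_unif_mem_Icc : ∀ᵐ z ∂unif, z ∈ Icc (-1 : ℝ) 1 :=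
  Measure.ae_smul_measure (ae_restrict_mem measurableSet_Icc) _

lemma integral_unif_indicator_Icc (f : ℝ → ℝ) {s : ℝ} (hs₀ : 0 ≤ s) (hs₁ : s ≤ 1) :
    ∫ z, (Icc (-s) s).indicator f z ∂unif = 2⁻¹ * ∫ z in -s..s, f z := by
  rw [unif, integral_smul_measure, integral_indicator measurableSet_Icc,
    Measure.restrict_restrict measurableSet_Icc,
    inter_eq_left.2 (Icc_subset_Icc (by linarith) hs₁), intervalIntegral.integral_of_le (by linarith),
    integral_Icc_eq_integral_Ioc]
  simp

lemma measureReal_pi_univ_pi_const {ι α : Type*} [Fintype ι] [MeasurableSpace α] (ν : Measure α)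
    [SigmaFinite ν] (S : Set α) :
    (Measure.pi fun _ : ι => ν).real (univ.pi fun _ => S) = ν.real S ^ Fintype.card ι := by
  simp [measureReal_def, Measure.pi_pi, ENNReal.toReal_pow]

section Prod
variable {α β : Type*} [MeasurableSpace α] [MeasurableSpace β] (μ : Measure α) (ν : Measure β)
  [IsFiniteMeasure μ] [IsFiniteMeasure ν] {S : Set (α × β)}

lemma measureReal_prod_apply_symm (hS : MeasurableSet S) :
    (μ.prod ν).real S = ∫ y, μ.real ((fun x => (x, y)) ⁻¹' S) ∂ν := by
  rw [measureReal_def, Measure.prod_apply_symm hS, ← integral_toReal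
    (measurable_measure_prodMk_right hS).aemeasurable (ae_of_all _ fun _ => measure_lt_top _ _)]
  rfl

lemma integrable_measureReal_prodMk_right (hS : MeasurableSet S) :
    Integrable (fun y => μ.real ((fun x => (x, y)) ⁻¹' S)) ν :=
  Integrable.of_bound (measurable_measure_prodMk_right hS).ennreal_toReal.aestronglyMeasurable
    (μ.real univ) (ae_of_all _ fun _ => by
      rw [Real.norm_of_nonneg measureReal_nonneg]; exact measureReal_mono (subset_univ _))

end Prod

lemma intervalIntegral_comp_abs {f : ℝ → ℝ} (hf : Continuous f) {a : ℝ} (ha : 0 ≤ a) :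
    ∫ x in -a..a, f |x| = 2 * ∫ x in 0..a, f x := by
  have hfabs : Continuous fun x => f |x| := hf.comp continuous_abs
  rw [← intervalIntegral.integral_add_adjacent_intervals (b := 0)
    (hfabs.intervalIntegrable _ _) (hfabs.intervalIntegrable _ _)]
  have hneg : ∫ x in -a..0, f |x| = ∫ x in -a..0, f (-x) :=
    intervalIntegral.integral_congr fun x hx => by
      rw [uIcc_of_le (by linarith)] at hx; rw [abs_of_nonpos hx.2]
  have hpos : ∫ x in 0..a, f |x| = ∫ x in 0..a, f x :=
    intervalIntegral.integral_congr fun x hx => by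
      rw [uIcc_of_le ha] at hx; rw [abs_of_nonneg hx.1]
  rw [hneg, hpos, intervalIntegral.integral_comp_neg, neg_neg, neg_zero]
  ring

lemma integral_half_one_add_pow_sub_half_one_sub_pow (n : ℕ) (s : ℝ) :
    ∫ c in 0..s, (((1 + c) / 2) ^ n - ((1 - c) / 2) ^ n)
      = ((1 + s) ^ (n + 1) + (1 - s) ^ (n + 1) - 2) / ((n + 1) * 2 ^ n) := by
  simp only [div_pow, ← sub_div, intervalIntegral.integral_div]
  rw [intervalIntegral.integral_sub (Continuous.intervalIntegrable (by fun_prop) _ _)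
      (Continuous.intervalIntegrable (by fun_prop) _ _),
    intervalIntegral.integral_comp_add_left (· ^ n), intervalIntegral.integral_comp_sub_left (· ^ n),
    integral_pow, integral_pow]
  field_simp
  ring

section Sections
variable {ι : Type*} [Fintype ι] (hne : (Finset.univ : Finset ι).Nonempty) {s c : ℝ}

lemma setOf_abs_min_lt_of_le (hcs : c ≤ s) :
    {x : ι → ℝ | |min (Finset.univ.inf' hne x) s| < c}
      = (univ.pi fun _ => Ioi (-c)) \ univ.pi fun _ => Ici c := by
  ext x
  simp only [mem_ofPred_eq, mem_sdiff, mem_univ_pi, mem_Ioi, mem_Ici, abs_lt, lt_min_iff,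
    min_lt_iff, Finset.lt_inf'_iff, Finset.inf'_lt_iff, Finset.mem_univ, true_imp_iff,
    true_and, not_forall, not_le]
  constructor
  · rintro ⟨⟨hlow, _⟩, hx | hsc⟩
    · exact ⟨hlow, hx⟩
    · exact absurd hsc (not_lt.2 hcs)
  · rintro ⟨hlow, i, hi⟩
    exact ⟨⟨hlow, by linarith [hlow i]⟩, Or.inl ⟨i, hi⟩⟩

lemma setOf_abs_min_lt_of_lt (hs : 0 ≤ s) (hsc : s < c) :
    {x : ι → ℝ | |min (Finset.univ.inf' hne x) s| < c} = univ.pi fun _ => Ioi (-c) := by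
  ext x
  simp only [mem_ofPred_eq, mem_univ_pi, mem_Ioi, abs_lt, lt_min_iff, Finset.lt_inf'_iff,
    Finset.mem_univ, true_imp_iff]
  exact ⟨fun h => h.1.1, fun h => ⟨⟨h, by linarith⟩, (min_le_right _ _).trans_lt hsc⟩⟩

lemma setOf_abs_max_lt_of_le (hcs : c ≤ s) :
    {x : ι → ℝ | |max (Finset.univ.sup' hne x) s| < c} = ∅ :=
  eq_empty_of_forall_notMem fun _ hx =>
    (hcs.trans ((le_max_right _ _).trans (le_abs_self _))).not_gt hx

lemma setOf_abs_max_lt_of_lt (hs : 0 ≤ s) (hsc : s < c) :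
    {x : ι → ℝ | |max (Finset.univ.sup' hne x) s| < c} = univ.pi fun _ => Iio c := by
  ext x
  rw [mem_ofPred_eq, abs_of_nonneg (hs.trans (le_max_right _ _))]
  simp [Finset.sup'_lt_iff, hsc]

lemma measureReal_abs_min_lt_sub_measureReal_abs_max_lt (hs : 0 ≤ s) (hc₀ : 0 ≤ c) (hc₁ : c ≤ 1) :
    (Measure.pi fun _ : ι => unif).real {x | |min (Finset.univ.inf' hne x) s| < c}
      - (Measure.pi fun _ : ι => unif).real {x | |max (Finset.univ.sup' hne x) s| < c}
      = if c ≤ s then ((1 + c) / 2) ^ Fintype.card ι - ((1 - c) / 2) ^ Fintype.card ι else 0 := by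
  -- at `c = 0` both events are empty, but `{X_i ≥ 0}` is not contained in `{X_i > 0}`
  rcases hc₀.eq_or_lt with rfl | hc₀
  · simp [hs, (abs_nonneg _).not_gt]
  split_ifs with hcs
  · have hsub : (univ.pi fun _ => Ici c) ⊆ univ.pi fun (_ : ι) => Ioi (-c) :=
      pi_mono fun _ _ => Ici_subset_Ioi.2 (by linarith)
    rw [setOf_abs_min_lt_of_le hne hcs, setOf_abs_max_lt_of_le hne hcs, measureReal_empty,
      sub_zero, measureReal_sdiff hsub (MeasurableSet.univ_pi fun _ => measurableSet_Ici),
      measureReal_pi_univ_pi_const, measureReal_pi_univ_pi_const,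
      unif_real_Ioi (by linarith) (by linarith), unif_real_Ici (by linarith) hc₁, sub_neg_eq_add,
      add_comm]
  · rw [not_le] at hcs
    rw [setOf_abs_min_lt_of_lt hne hs hcs, setOf_abs_max_lt_of_lt hne hs hcs,
      measureReal_pi_univ_pi_const, measureReal_pi_univ_pi_const,
      unif_real_Ioi (by linarith) (by linarith), unif_real_Iio (by linarith) hc₁, sub_neg_eq_add,
      sub_self]

end Sections

theorem measureReal_abs_min_lt_abs_sub_measureReal_abs_max_lt_abs {ι : Type*} [Fintype ι]
    (hne : (Finset.univ : Finset ι).Nonempty) {s : ℝ} (hs₀ : 0 ≤ s) (hs₁ : s ≤ 1) :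
    ((Measure.pi fun _ : ι => unif).prod unif).real
        {p | |min (Finset.univ.inf' hne p.1) s| < |p.2|}
      - ((Measure.pi fun _ : ι => unif).prod unif).real
        {p | |max (Finset.univ.sup' hne p.1) s| < |p.2|}
      = ((1 + s) ^ (Fintype.card ι + 1) + (1 - s) ^ (Fintype.card ι + 1) - 2)
          / ((Fintype.card ι + 1) * 2 ^ Fintype.card ι) := by
  have hmin : MeasurableSet {p : (ι → ℝ) × ℝ | |min (Finset.univ.inf' hne p.1) s| < |p.2|} := by
    measurability
  have hmax : MeasurableSet {p : (ι → ℝ) × ℝ | |max (Finset.univ.sup' hne p.1) s| < |p.2|} := by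
    measurability
  rw [measureReal_prod_apply_symm _ _ hmin, measureReal_prod_apply_symm _ _ hmax,
    ← integral_sub (integrable_measureReal_prodMk_right _ _ hmin)
      (integrable_measureReal_prodMk_right _ _ hmax)]
  calc _ = ∫ z, (Icc (-s) s).indicator
          (fun z => ((1 + |z|) / 2) ^ Fintype.card ι - ((1 - |z|) / 2) ^ Fintype.card ι) z ∂unif := by
        refine integral_congr_ae (ae_unif_mem_Icc.mono fun z hz => ?_)
        simp only [preimage_ofPred_eq]
        rw [measureReal_abs_min_lt_sub_measureReal_abs_max_lt hne hs₀ (abs_nonneg z)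
          (abs_le.2 hz), indicator_apply]
        simp only [mem_Icc, ← abs_le]
    _ = _ := by
        rw [integral_unif_indicator_Icc _ hs₀ hs₁,
          intervalIntegral_comp_abs
            (f := fun c => ((1 + c) / 2) ^ Fintype.card ι - ((1 - c) / 2) ^ Fintype.card ι)
            (by fun_prop) hs₀,
          integral_half_one_add_pow_sub_half_one_sub_pow, ← mul_assoc, inv_mul_cancel₀ two_ne_zero,
          one_mul]

theorem stmt_11 (k : ℕ) (hk : 2 ≤ k) (s : ℝ) (hs0 : 0 < s) (hs1 : s ≤ 1) :
    (((Measure.pi fun _ : Fin (k - 1) => unif).prod unif)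
        {p : (Fin (k - 1) → ℝ) × ℝ |
          |min (Finset.univ.inf' (Finset.univ_nonempty_iff.2 ⟨⟨0, by omega⟩⟩) p.1) s| < |p.2|}).toReal
      - (((Measure.pi fun _ : Fin (k - 1) => unif).prod unif)
        {p : (Fin (k - 1) → ℝ) × ℝ |
          |max (Finset.univ.sup' (Finset.univ_nonempty_iff.2 ⟨⟨0, by omega⟩⟩) p.1) s| < |p.2|}).toReal
      = ((1 + s) ^ k + (1 - s) ^ k - 2) / (k * 2 ^ (k - 1)) := by
  have h := measureReal_abs_min_lt_abs_sub_measureReal_abs_max_lt_abs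
    (Finset.univ_nonempty_iff.2 ⟨(⟨0, by omega⟩ : Fin (k - 1))⟩) hs0.le hs1
  rw [Fintype.card_fin, Nat.sub_add_cancel (by omega : 1 ≤ k), ← Nat.cast_add_one,
    Nat.sub_add_cancel (by omega : 1 ≤ k)] at h
  exact h
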